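/- Let k_0, k_1, …, k_m be positive reals, 0 < q < 1, and let (x_n) be the multigeometric sequence (k_0 q, k_1 q, …, k_m q, k_0 q², k_1 q², …, k_m q², k_0 q³, …). Assume the achievement set E(x_n) has nonempty interior. Fix k ∈ ℕ and suppose the map from {0,1}^{(m+1)(k+1)} to ℝ sending (ε_{j,i})_{0≤j≤k, 0≤i≤m} to ∑_{j=0}^{k} q^j ∑_{i=0}^{m} ε_{j,i} k_i is not injective (i.e., some element of Σ + Σq + … + Σq^k has two distinct 0–1 representations, where Σ = {∑_{i=0}^m ε_i k_i : ε_i ∈ {0,1}}). Then the uniqueness set U(x_n) is nowhere dense. -/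

import Mathlib

open Set Topology

noncomputable section

/-- The achievement set (set of subsums) of a series `∑ xₙ`. -/
def achSet (x : ℕ → ℝ) : Set ℝ := {t : ℝ | ∃ A : Set ℕ, t = ∑' n : A, x n}

/-- The uniqueness set: points having exactly one representation as a subsum. -/
def uniqSet (x : ℕ → ℝ) : Set ℝ := {t : ℝ | ∃! A : Set ℕ, t = ∑' n : A, x n}

/-! Shifting indices by one period `m + 1` multiplies every term by `q`, so every subsum is a
finite prefix plus `q ^ B` times another subsum. Near a subsum `t`, keep the part of its index set
below block `B`, append either of the two distinct blocks with equal sums given by non-injectivity,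
and then a copy, scaled by `q ^ (B + L)`, of an arbitrary subsum. This places, within `q ^ B ∑ xₙ`
of `t`, an affine copy of `E(xₙ)` whose points all have two representations; the copy of the
interior of `E(xₙ)` is open and misses `U(xₙ)`. So `U(xₙ) ⊆ E(xₙ)` lies in the closure of the
interior of its complement, hence is nowhere dense. -/

theorem IsNowhereDense.of_subset_closure_interior_compl {X : Type*} [TopologicalSpace X]
    {s : Set X} (h : s ⊆ closure (interior sᶜ)) : IsNowhereDense s := by
  have hdisj : closure s ⊆ (interior (closure s))ᶜ := by
    simpa only [interior_compl, closure_compl, interior_interior] using closure_mono h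
  exact eq_empty_of_subset_empty fun y hy => hdisj (interior_subset hy) hy

theorem uniqSet_subset_achSet (x : ℕ → ℝ) : uniqSet x ⊆ achSet x :=
  fun _ ht => ht.exists

theorem achSet_subset_Icc {x : ℕ → ℝ} (hx0 : ∀ n, 0 ≤ x n) (hsum : Summable x) :
    achSet x ⊆ Icc 0 (∑' n, x n) := by
  rintro _ ⟨A, rfl⟩
  exact ⟨tsum_nonneg fun n => hx0 n, hsum.tsum_subtype_le _ A hx0⟩

theorem Set.union_image_add_right_inj {N : ℕ} {G₁ G₂ S₁ S₂ : Set ℕ} (h₁ : G₁ ⊆ Iio N)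
    (h₂ : G₂ ⊆ Iio N) (h : G₁ ∪ (· + N) '' S₁ = G₂ ∪ (· + N) '' S₂) : G₁ = G₂ ∧ S₁ = S₂ := by
  have split : ∀ G S : Set ℕ, G ⊆ Iio N →
      (G ∪ (· + N) '' S) ∩ Iio N = G ∧ (· + N) ⁻¹' (G ∪ (· + N) '' S) = S := by
    intro G S hG
    constructor
    · ext n
      have := @hG n
      simp only [mem_inter_iff, mem_union, mem_image, mem_Iio] at this ⊢
      constructor
      · rintro ⟨h | ⟨s, -, rfl⟩, hn⟩
        · exact h
        · omega
      · exact fun hn => ⟨Or.inl hn, this hn⟩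
    · ext n
      have := @hG (n + N)
      simp only [mem_preimage, mem_union, mem_image, mem_Iio, add_left_inj, exists_eq_right] at this ⊢
      constructor
      · rintro (h | h)
        · exact absurd (this h) (by omega)
        · exact h
      · exact Or.inr
  obtain ⟨hG₁, hS₁⟩ := split G₁ S₁ h₁
  obtain ⟨hG₂, hS₂⟩ := split G₂ S₂ h₂
  exact ⟨hG₁.symm.trans (h ▸ hG₂), hS₁.symm.trans (h ▸ hS₂)⟩

section SelfSimilar

variable {x : ℕ → ℝ} {p : ℕ} {q : ℝ}

theorem apply_add_mul_eq_pow_mul (hper : ∀ n, x (n + p) = q * x n) (n c : ℕ) :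
    x (n + c * p) = q ^ c * x n := by
  induction c with
  | zero => simp
  | succ c ih => rw [add_one_mul, ← add_assoc, hper, ih, pow_succ']; ring

theorem summable_of_apply_add_eq_mul [NeZero p] (hx0 : ∀ n, 0 ≤ x n) (hq0 : 0 ≤ q) (hq1 : q < 1)
    (hper : ∀ n, x (n + p) = q * x n) : Summable x := by
  rw [← (Nat.divModEquiv p).symm.summable_iff]
  have hprod : Summable fun z : ℕ × Fin p => q ^ z.1 * x z.2 :=
    (summable_geometric_of_lt_one hq0 hq1).mul_of_nonneg
      (Summable.of_finite : Summable fun i : Fin p => x i)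
      (fun c => pow_nonneg hq0 c) (fun i => hx0 i)
  refine hprod.congr fun z => ?_
  simp [add_comm (z.1 * p), apply_add_mul_eq_pow_mul hper]

theorem tsum_image_add_mul (hper : ∀ n, x (n + p) = q * x n) (S : Set ℕ) (c : ℕ) :
    ∑' n : (· + c * p) '' S, x n = q ^ c * ∑' n : S, x n := by
  rw [tsum_image x (add_left_injective _).injOn, ← tsum_mul_left]
  exact tsum_congr fun n => apply_add_mul_eq_pow_mul hper n c

theorem tsum_union_image_add_mul (hsum : Summable x) (hper : ∀ n, x (n + p) = q * x n)
    {c : ℕ} {G : Set ℕ} (hG : G ⊆ Iio (c * p)) (S : Set ℕ) :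
    ∑' n : ↑(G ∪ (· + c * p) '' S), x n = ∑' n : G, x n + q ^ c * ∑' n : S, x n := by
  have hdisj : Disjoint G ((· + c * p) '' S) := by
    rw [disjoint_left]
    rintro _ hn ⟨s, -, rfl⟩
    have := hG hn
    simp only [mem_Iio] at this
    omega
  rw [(hsum.subtype _).tsum_union_disjoint hdisj (hsum.subtype _), tsum_image_add_mul hper]

theorem exists_prefix_add_pow_mul (hsum : Summable x) (hper : ∀ n, x (n + p) = q * x n)
    {t : ℝ} (ht : t ∈ achSet x) (c : ℕ) :
    ∃ G ⊆ Iio (c * p), ∃ s ∈ achSet x, t = ∑' n : G, x n + q ^ c * s := by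
  obtain ⟨A, rfl⟩ := ht
  refine ⟨A ∩ Iio (c * p), inter_subset_right, _, ⟨(· + c * p) ⁻¹' A, rfl⟩, ?_⟩
  suffices hA : A ∩ Iio (c * p) ∪ (· + c * p) '' ((· + c * p) ⁻¹' A) = A by
    rw [← tsum_union_image_add_mul hsum hper inter_subset_right, hA]
  ext n
  simp only [mem_union, mem_inter_iff, mem_Iio, mem_image, mem_preimage]
  constructor
  · rintro (⟨hn, -⟩ | ⟨s, hs, rfl⟩) <;> assumption
  · intro hn
    by_cases h : n < c * p
    · exact Or.inl ⟨hn, h⟩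
    · exact Or.inr ⟨n - c * p, by rwa [Nat.sub_add_cancel (not_lt.mp h)], by omega⟩

theorem add_pow_mul_notMem_uniqSet (hsum : Summable x) (hper : ∀ n, x (n + p) = q * x n)
    {c : ℕ} {G₁ G₂ : Set ℕ} (hne : G₁ ≠ G₂) (h₁ : G₁ ⊆ Iio (c * p)) (h₂ : G₂ ⊆ Iio (c * p))
    (heq : ∑' n : G₁, x n = ∑' n : G₂, x n) {e : ℝ} (he : e ∈ achSet x) :
    ∑' n : G₁, x n + q ^ c * e ∉ uniqSet x := by
  obtain ⟨S, rfl⟩ := he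
  rintro ⟨R, -, hR⟩
  have hR₁ := hR _ (tsum_union_image_add_mul hsum hper h₁ S).symm
  have hR₂ := hR (G₂ ∪ (· + c * p) '' S) (by
    beta_reduce
    rw [heq, tsum_union_image_add_mul hsum hper h₂ S])
  exact hne (union_image_add_right_inj h₁ h₂ (hR₁.trans hR₂.symm)).1

theorem add_pow_mul_mem_interior_compl_uniqSet (hsum : Summable x)
    (hper : ∀ n, x (n + p) = q * x n) (hq0 : 0 < q) {c : ℕ} {G₁ G₂ : Set ℕ} (hne : G₁ ≠ G₂)
    (h₁ : G₁ ⊆ Iio (c * p)) (h₂ : G₂ ⊆ Iio (c * p)) (heq : ∑' n : G₁, x n = ∑' n : G₂, x n)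
    {e : ℝ} (he : e ∈ interior (achSet x)) :
    ∑' n : G₁, x n + q ^ c * e ∈ interior (uniqSet x)ᶜ := by
  let f : ℝ → ℝ := fun e => ∑' n : G₁, x n + q ^ c * e
  have hf_open : IsOpenMap f :=
    (isOpenMap_add_left _).comp (Homeomorph.mulLeft₀ _ (pow_pos hq0 c).ne').isOpenMap
  have hf_achSet : f '' achSet x ⊆ (uniqSet x)ᶜ := by
    rintro _ ⟨e, he, rfl⟩
    exact add_pow_mul_notMem_uniqSet hsum hper hne h₁ h₂ heq he
  exact interior_maximal ((image_mono interior_subset).trans hf_achSet)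
    (hf_open _ isOpen_interior) (mem_image_of_mem f he)

theorem achSet_subset_closure_interior_compl_uniqSet (hx0 : ∀ n, 0 ≤ x n) (hsum : Summable x)
    (hq0 : 0 < q) (hq1 : q < 1) (hper : ∀ n, x (n + p) = q * x n)
    (hint : (interior (achSet x)).Nonempty) {L : ℕ} {F₁ F₂ : Set ℕ} (hne : F₁ ≠ F₂)
    (h₁ : F₁ ⊆ Iio (L * p)) (h₂ : F₂ ⊆ Iio (L * p)) (heq : ∑' n : F₁, x n = ∑' n : F₂, x n) :
    achSet x ⊆ closure (interior (uniqSet x)ᶜ) := by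
  obtain ⟨e₀, he₀⟩ := hint
  obtain ⟨S₀, hS₀⟩ := interior_subset he₀
  have hIcc := achSet_subset_Icc hx0 hsum
  intro t ht
  rw [Metric.mem_closure_iff]
  intro δ hδ
  obtain ⟨B, hB⟩ : ∃ B : ℕ, q ^ B * ∑' n, x n < δ := by
    have hlim := (tendsto_pow_atTop_nhds_zero_of_lt_one hq0.le hq1).mul_const (∑' n, x n)
    rw [zero_mul] at hlim
    exact (hlim.eventually (gt_mem_nhds hδ)).exists
  obtain ⟨G, hG, s, hs, rfl⟩ := exists_prefix_add_pow_mul hsum hper ht B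
  have hGF_sub : ∀ F ⊆ Iio (L * p), G ∪ (· + B * p) '' F ⊆ Iio ((B + L) * p) := by
    rintro F hF n (hn | ⟨n, hn, rfl⟩)
    · have := hG hn
      simp only [mem_Iio, add_mul] at this ⊢
      omega
    · have := hF hn
      simp only [mem_Iio, add_mul] at this ⊢
      omega
  have hGF_sum := fun F => tsum_union_image_add_mul hsum hper hG F
  refine ⟨_, add_pow_mul_mem_interior_compl_uniqSet hsum hper hq0
    (fun h => hne (union_image_add_right_inj hG hG h).2) (hGF_sub F₁ h₁) (hGF_sub F₂ h₂)
    (by rw [hGF_sum, hGF_sum, heq]) he₀, ?_⟩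
  have hs₀ : ∑' n : F₁, x n + q ^ L * e₀ ∈ achSet x :=
    ⟨F₁ ∪ (· + L * p) '' S₀, by rw [tsum_union_image_add_mul hsum hper h₁, hS₀]⟩
  calc dist _ _ = |q ^ B * (s - (∑' n : F₁, x n + q ^ L * e₀))| := by
        rw [hGF_sum, Real.dist_eq, pow_add]
        ring_nf
    _ = q ^ B * |s - (∑' n : F₁, x n + q ^ L * e₀)| := by
        rw [abs_mul, abs_of_nonneg (pow_nonneg hq0.le B)]
    _ ≤ q ^ B * ∑' n, x n :=
        mul_le_mul_of_nonneg_left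
          (abs_sub_le_of_nonneg_of_le (hIcc hs).1 (hIcc hs).2 (hIcc hs₀).1 (hIcc hs₀).2)
          (pow_nonneg hq0.le B)
    _ < δ := hB

end SelfSimilar

section Multigeometric

variable {m : ℕ} {K : Fin (m + 1) → ℝ} {q : ℝ} {x : ℕ → ℝ}

theorem multigeometric_apply_add_period
    (hx : ∀ n : ℕ, x n = K ⟨n % (m + 1), Nat.mod_lt n (Nat.succ_pos m)⟩ * q ^ (n / (m + 1) + 1))
    (n : ℕ) : x (n + (m + 1)) = q * x n := by
  rw [hx, hx]
  simp only [Nat.add_mod_right, Nat.add_div_right n (Nat.succ_pos m), pow_succ]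
  ring

theorem multigeometric_apply_block
    (hx : ∀ n : ℕ, x n = K ⟨n % (m + 1), Nat.mod_lt n (Nat.succ_pos m)⟩ * q ^ (n / (m + 1) + 1))
    (j : ℕ) (i : Fin (m + 1)) : x (i + (m + 1) * j) = K i * q ^ (j + 1) := by
  rw [hx]
  simp [Nat.add_mul_mod_self_left, Nat.add_mul_div_left _ _ (Nat.succ_pos m), Nat.mod_eq_of_lt i.isLt,
    Nat.div_eq_of_lt i.isLt]

theorem multigeometric_exists_ne_tsum_eq
    (hx : ∀ n : ℕ, x n = K ⟨n % (m + 1), Nat.mod_lt n (Nat.succ_pos m)⟩ * q ^ (n / (m + 1) + 1))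
    {k : ℕ} (hnoninj : ¬ Function.Injective (fun ε : Fin (k + 1) → Fin (m + 1) → Bool =>
      ∑ j : Fin (k + 1), q ^ (j : ℕ) * ∑ i : Fin (m + 1), if ε j i then K i else 0)) :
    ∃ F₁ F₂ : Set ℕ, F₁ ≠ F₂ ∧ F₁ ⊆ Iio ((k + 1) * (m + 1)) ∧ F₂ ⊆ Iio ((k + 1) * (m + 1)) ∧
      ∑' n : F₁, x n = ∑' n : F₂, x n := by
  let φ : Fin (k + 1) × Fin (m + 1) → ℕ := fun z => finProdFinEquiv z
  have hφ : Function.Injective φ := Fin.val_injective.comp finProdFinEquiv.injective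
  let F : (Fin (k + 1) → Fin (m + 1) → Bool) → Set ℕ := fun ε => φ '' {z | ε z.1 z.2}
  have hF_sub : ∀ ε, F ε ⊆ Iio ((k + 1) * (m + 1)) := by
    rintro ε _ ⟨z, -, rfl⟩
    exact (finProdFinEquiv z).isLt
  have hF_inj : Function.Injective F := by
    intro ε ε' h
    funext j i
    simpa [F, hφ.mem_set_image] using congrArg (φ (j, i) ∈ ·) h
  have hF_sum : ∀ ε, ∑' n : F ε, x n =
      q * ∑ j : Fin (k + 1), q ^ (j : ℕ) * ∑ i : Fin (m + 1), if ε j i then K i else 0 := by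
    intro ε
    rw [tsum_image x hφ.injOn, tsum_subtype {z | ε z.1 z.2} (fun z => x (φ z)), tsum_fintype,
      Fintype.sum_prod_type, Finset.mul_sum]
    refine Finset.sum_congr rfl fun j _ => ?_
    simp only [φ, finProdFinEquiv_apply_val, multigeometric_apply_block hx, pow_succ, indicator_apply,
      mem_ofPred_eq, Finset.mul_sum, mul_ite, mul_zero]
    exact Finset.sum_congr rfl fun i _ => by split_ifs <;> ring
  obtain ⟨ε₁, ε₂, heq, hne⟩ := Function.not_injective_iff.mp hnoninj
  refine ⟨F ε₁, F ε₂, hF_inj.ne hne, hF_sub _, hF_sub _, ?_⟩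
  rw [hF_sum, hF_sum]
  exact congrArg (q * ·) heq

end Multigeometric

theorem uniqSet_nowhereDense_of_multigeometric
    (m : ℕ) (K : Fin (m + 1) → ℝ) (hK : ∀ i, 0 < K i)
    (q : ℝ) (hq0 : 0 < q) (hq1 : q < 1)
    (x : ℕ → ℝ)
    (hx : ∀ n : ℕ, x n = K ⟨n % (m + 1), Nat.mod_lt n (Nat.succ_pos m)⟩ * q ^ (n / (m + 1) + 1))
    (hint : (interior (achSet x)).Nonempty)
    (k : ℕ)
    (hnoninj : ¬ Function.Injective (fun ε : Fin (k + 1) → Fin (m + 1) → Bool =>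
      ∑ j : Fin (k + 1), q ^ (j : ℕ) * ∑ i : Fin (m + 1), if ε j i then K i else 0)) :
    IsNowhereDense (uniqSet x) := by
  have hx0 : ∀ n, 0 ≤ x n := fun n => by
    rw [hx n]
    exact mul_nonneg (hK _).le (pow_nonneg hq0.le _)
  have hper := multigeometric_apply_add_period hx
  have hsum := summable_of_apply_add_eq_mul hx0 hq0.le hq1 hper
  obtain ⟨F₁, F₂, hne, h₁, h₂, heq⟩ := multigeometric_exists_ne_tsum_eq hx hnoninj
  exact IsNowhereDense.of_subset_closure_interior_compl <| (uniqSet_subset_achSet x).trans <|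
    achSet_subset_closure_interior_compl_uniqSet hx0 hsum hq0 hq1 hper hint hne h₁ h₂ heq
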